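/- Let m be a positive integer, ε ∈ (0,1), λ > 0, and t₁ < t₂. Let ρ : [t₁, t₂] → ℝ be continuous with ρ(τ) ≥ ρ_min > 0 for all τ, and let 𝒳 : [t₁, t₂] → ℝ be continuously differentiable with 𝒳′(τ) ≥ 0 for all τ, 𝒳(t₁) = 4m−1 and 𝒳(t₂) = 4m+1. Then ∫_{t₁}^{t₂} (ρ(τ)·N(𝒳(τ))·𝒳′(τ) − 𝒳′(τ))·e^{λ(τ−t₂)} dτ ≥ 2ε·ρ_min·cos((π/2)·ε)·exp((4m−ε)²)·e^{λ(t₁−t₂)} − 2. -/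

import Mathlib

/-!
Since `cos (π/2 · s)` has period `4`, `N ≥ 0` on `[4m - 1, 4m + 1]` and
`N ≥ cos (π/2 · ε) · exp ((4m - ε)²)` on `[4m - ε, 4m + ε]`, so the integral of `N` over
`[4m - 1, 4m + 1]` is at least `2ε cos (π/2 · ε) exp ((4m - ε)²)`. As `𝒳` is nondecreasing it
stays in `[4m - 1, 4m + 1]`, where `N(𝒳) 𝒳' ≥ 0`; since moreover
`e^{λ(τ - t₂)} ∈ [e^{λ(t₁ - t₂)}, 1]`, the integrand dominates `(ρ_min e^{λ(t₁ - t₂)} N(𝒳) - 1) 𝒳'`,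
whose integral is `ρ_min e^{λ(t₁ - t₂)} ∫_{4m-1}^{4m+1} N - 2` by the substitution `s = 𝒳(τ)`.
-/

open Real

/-- The even smooth Nussbaum-type function `N(s) = exp(s²)·cos((π/2)·s)`. -/
noncomputable def Nfun (s : ℝ) : ℝ := Real.exp (s ^ 2) * Real.cos (Real.pi / 2 * s)

open Set intervalIntegral

theorem cos_pi_div_two_mul_sub_four_mul (m : ℤ) (s : ℝ) :
    cos (π / 2 * (s - 4 * m)) = cos (π / 2 * s) := by
  rw [← cos_sub_int_mul_two_pi (π / 2 * s) m]
  ring_nf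

@[fun_prop]
theorem continuous_Nfun : Continuous Nfun := by
  unfold Nfun
  fun_prop

theorem Nfun_nonneg_of_mem_Icc {m : ℤ} {s : ℝ} (hs : s ∈ Icc (4 * (m : ℝ) - 1) (4 * m + 1)) :
    0 ≤ Nfun s := by
  have hcos : 0 ≤ cos (π / 2 * (s - 4 * m)) :=
    cos_nonneg_of_mem_Icc ⟨by nlinarith [pi_pos, hs.1], by nlinarith [pi_pos, hs.2]⟩
  rw [cos_pi_div_two_mul_sub_four_mul] at hcos
  exact mul_nonneg (exp_pos _).le hcos

theorem cos_mul_exp_le_Nfun {m : ℤ} {ε s : ℝ} (hε₀ : 0 ≤ ε) (hε₁ : ε ≤ 1) (hεm : ε ≤ 4 * m)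
    (hs : s ∈ Icc (4 * (m : ℝ) - ε) (4 * m + ε)) :
    cos (π / 2 * ε) * exp ((4 * m - ε) ^ 2) ≤ Nfun s := by
  have hdist : |π / 2 * (s - 4 * m)| ≤ π / 2 * ε := by
    rw [abs_mul, abs_of_pos (by positivity)]
    gcongr
    exact abs_sub_le_iff.mpr ⟨by linarith [hs.2], by linarith [hs.1]⟩
  have hcos : cos (π / 2 * ε) ≤ cos (π / 2 * s) := by
    rw [← cos_pi_div_two_mul_sub_four_mul m s, ← cos_abs (π / 2 * (s - 4 * m))]
    exact cos_le_cos_of_nonneg_of_le_pi (abs_nonneg _) (by nlinarith [pi_pos]) hdist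
  have hcos_nonneg : 0 ≤ cos (π / 2 * ε) :=
    cos_nonneg_of_mem_Icc ⟨by nlinarith [pi_pos], by nlinarith [pi_pos]⟩
  have hexp : exp ((4 * m - ε) ^ 2) ≤ exp (s ^ 2) :=
    exp_le_exp.mpr (pow_le_pow_left₀ (by linarith) hs.1 2)
  rw [Nfun, mul_comm (exp _)]
  exact mul_le_mul hcos hexp (exp_pos _).le (hcos_nonneg.trans hcos)

theorem two_mul_mul_cos_mul_exp_le_integral_Nfun {m : ℤ} {ε : ℝ} (hε₀ : 0 ≤ ε) (hε₁ : ε ≤ 1)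
    (hεm : ε ≤ 4 * m) :
    2 * ε * (cos (π / 2 * ε) * exp ((4 * m - ε) ^ 2)) ≤ ∫ s in 4 * m - 1..4 * m + 1, Nfun s := by
  calc 2 * ε * (cos (π / 2 * ε) * exp ((4 * m - ε) ^ 2))
      = ∫ _ in 4 * m - ε..4 * m + ε, cos (π / 2 * ε) * exp ((4 * m - ε) ^ 2) := by
        rw [integral_const, smul_eq_mul]
        ring
    _ ≤ ∫ s in 4 * m - ε..4 * m + ε, Nfun s :=
        integral_mono_on (by linarith) intervalIntegrable_const
          (continuous_Nfun.intervalIntegrable _ _)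
          fun s hs ↦ cos_mul_exp_le_Nfun hε₀ hε₁ hεm hs
    _ ≤ ∫ s in 4 * m - 1..4 * m + 1, Nfun s :=
        integral_mono_interval (by linarith) (by linarith) (by linarith)
          (MeasureTheory.ae_restrict_of_forall_mem measurableSet_Ioc fun s hs ↦
            Nfun_nonneg_of_mem_Icc (m := m) ⟨hs.1.le, hs.2⟩)
          (continuous_Nfun.intervalIntegrable _ _)

theorem integral_comp_mul_derivWithin_Icc {f g : ℝ → ℝ} {a b : ℝ} (hab : a < b)
    (hf : ContDiffOn ℝ 1 f (Icc a b)) (hg : ContinuousOn g (f '' Icc a b)) :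
    ∫ x in a..b, g (f x) * derivWithin f (Icc a b) x = ∫ y in f a..f b, g y := by
  have hderiv : ∀ x ∈ Ioo (min a b) (max a b),
      HasDerivWithinAt f (derivWithin f (Icc a b) x) (Ioi x) x := by
    rw [min_eq_left hab.le, max_eq_right hab.le]
    intro x hx
    exact ((hf.differentiableOn one_ne_zero x (Ioo_subset_Icc_self hx)).hasDerivWithinAt.hasDerivAt
      (Icc_mem_nhds hx.1 hx.2)).hasDerivWithinAt
  rw [← uIcc_of_lt hab] at hg
  exact integral_comp_mul_deriv'' (uIcc_of_lt hab ▸ hf.continuousOn) hderiv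
    (uIcc_of_lt hab ▸ hf.continuousOn_derivWithin (uniqueDiffOn_Icc hab) le_rfl) hg

theorem mapsTo_Icc_of_deriv_nonneg {f : ℝ → ℝ} {a b : ℝ} (hf : ContinuousOn f (Icc a b))
    (hf' : DifferentiableOn ℝ f (Ioo a b)) (hf'₀ : ∀ x ∈ Ioo a b, 0 ≤ deriv f x) :
    MapsTo f (Icc a b) (Icc (f a) (f b)) := by
  refine (monotoneOn_of_deriv_nonneg (convex_Icc a b) hf ?_ ?_).mapsTo_Icc <;>
    rwa [interior_Icc]

theorem mul_sub_one_mul_le_of_le_of_le_one {ρ₀ r E e n d : ℝ} (hρ₀ : 0 ≤ ρ₀) (hr : ρ₀ ≤ r)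
    (hE : 0 ≤ E) (hEe : E ≤ e) (he : e ≤ 1) (hn : 0 ≤ n) (hd : 0 ≤ d) :
    (ρ₀ * E * n - 1) * d ≤ (r * n * d - d) * e := by
  have hweight : ρ₀ * E * (n * d) ≤ r * e * (n * d) :=
    mul_le_mul_of_nonneg_right (mul_le_mul hr hEe hE (hρ₀.trans hr)) (mul_nonneg hn hd)
  nlinarith [mul_le_of_le_one_right hd he]

/-- Positive-excursion estimate (Case 2 of the paper's Nussbaum lemma): if `𝒳` increases
from `4m−1` to `4m+1` on `[t₁, t₂]`, then
`∫_{t₁}^{t₂} (ρ N(𝒳) 𝒳' − 𝒳') e^{λ(τ−t₂)} dτ ≥ 2ε ρmin cos((π/2)ε) e^{(4m−ε)²} e^{λ(t₁−t₂)} − 2`. -/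
theorem positive_excursion_estimate (m : ℕ) (hm : 0 < m) (ε : ℝ) (hε : ε ∈ Set.Ioo (0:ℝ) 1)
    (lam : ℝ) (hlam : 0 < lam) (t₁ t₂ : ℝ) (ht : t₁ < t₂) (ρ 𝒳 : ℝ → ℝ)
    (hρcont : ContinuousOn ρ (Set.Icc t₁ t₂)) (ρmin : ℝ) (hρmin : 0 < ρmin)
    (hρ : ∀ τ ∈ Set.Icc t₁ t₂, ρmin ≤ ρ τ)
    (h𝒳 : ContDiffOn ℝ 1 𝒳 (Set.Icc t₁ t₂))
    (h𝒳' : ∀ τ ∈ Set.Icc t₁ t₂, 0 ≤ deriv 𝒳 τ)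
    (h𝒳₁ : 𝒳 t₁ = 4 * (m:ℝ) - 1) (h𝒳₂ : 𝒳 t₂ = 4 * (m:ℝ) + 1) :
    2 * ε * ρmin * Real.cos (Real.pi / 2 * ε) * Real.exp ((4 * (m:ℝ) - ε) ^ 2) *
        Real.exp (lam * (t₁ - t₂)) - 2 ≤
      ∫ τ in t₁..t₂, (ρ τ * Nfun (𝒳 τ) * deriv 𝒳 τ - deriv 𝒳 τ) * Real.exp (lam * (τ - t₂)) := by
  -- `deriv 𝒳` need not be continuous at `t₁, t₂`; the derivative within `[t₁, t₂]` is.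
  set φ := derivWithin 𝒳 (Icc t₁ t₂)
  set E := exp (lam * (t₁ - t₂))
  have hφ_eq : EqOn (deriv 𝒳) φ (Ioo t₁ t₂) := fun τ hτ ↦
    (derivWithin_of_mem_nhds (Icc_mem_nhds hτ.1 hτ.2)).symm
  have hφ_cont : ContinuousOn φ (Icc t₁ t₂) :=
    h𝒳.continuousOn_derivWithin (uniqueDiffOn_Icc ht) le_rfl
  have h𝒳_cont := h𝒳.continuousOn
  have h𝒳_mapsTo : MapsTo 𝒳 (Icc t₁ t₂) (Icc (4 * m - 1) (4 * m + 1)) :=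
    h𝒳₁ ▸ h𝒳₂ ▸ mapsTo_Icc_of_deriv_nonneg h𝒳_cont
      ((h𝒳.differentiableOn one_ne_zero).mono Ioo_subset_Icc_self)
      fun τ hτ ↦ h𝒳' τ (Ioo_subset_Icc_self hτ)
  have hpointwise : ∀ τ ∈ Ioo t₁ t₂, (ρmin * E * Nfun (𝒳 τ) - 1) * φ τ ≤
      (ρ τ * Nfun (𝒳 τ) * φ τ - φ τ) * exp (lam * (τ - t₂)) := fun τ hτ ↦
    have hτ' := Ioo_subset_Icc_self hτ
    mul_sub_one_mul_le_of_le_of_le_one hρmin.le (hρ τ hτ') (exp_pos _).le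
      (exp_le_exp.mpr (by nlinarith [hτ.1])) (exp_le_one_iff.mpr (by nlinarith [hτ.2]))
      (Nfun_nonneg_of_mem_Icc (m := m) (by exact_mod_cast h𝒳_mapsTo hτ'))
      (hφ_eq hτ ▸ h𝒳' τ hτ')
  have hεm : ε ≤ 4 * ((m : ℤ) : ℝ) := by
    push_cast
    linarith [(Nat.one_le_cast (α := ℝ)).mpr hm, hε.2]
  calc _ = ρmin * E * (2 * ε * (cos (π / 2 * ε) * exp ((4 * m - ε) ^ 2))) - 2 := by ring
    _ ≤ ρmin * E * (∫ s in 4 * (m : ℝ) - 1..4 * m + 1, Nfun s) - 2 := by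
        gcongr
        exact_mod_cast two_mul_mul_cos_mul_exp_le_integral_Nfun hε.1.le hε.2.le hεm
    _ = ∫ s in 𝒳 t₁..𝒳 t₂, (ρmin * E * Nfun s - 1) := by
        rw [h𝒳₁, h𝒳₂, integral_sub ((continuous_Nfun.intervalIntegrable _ _).const_mul _)
          intervalIntegrable_const, integral_const_mul, integral_const, smul_eq_mul]
        ring
    _ = ∫ τ in t₁..t₂, (ρmin * E * Nfun (𝒳 τ) - 1) * φ τ :=
        (integral_comp_mul_derivWithin_Icc ht h𝒳 (by fun_prop)).symm
    _ ≤ ∫ τ in t₁..t₂, (ρ τ * Nfun (𝒳 τ) * φ τ - φ τ) * exp (lam * (τ - t₂)) :=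
        integral_mono_on_of_le_Ioo ht.le
          (ContinuousOn.intervalIntegrable_of_Icc ht.le (by fun_prop))
          (ContinuousOn.intervalIntegrable_of_Icc ht.le (by fun_prop)) hpointwise
    _ = _ := integral_congr_Ioo_of_le ht.le fun τ hτ ↦ by simp only [hφ_eq hτ]
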